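/- arXiv:1511.08873 — 6 statements merged into one kernel-verified Lean document; each statement's English description precedes it below -/
import Mathlib

section
/- Suppose σ_t, π, E_n are real numbers with π ≥ 0 and E_n > 0 satisfying the yield condition σ_t = σ_y + κ_H·π and the damage-activation condition E_n + σ_t²/(2κ_t) = a_I, and set T := (σ_t²/(2κ_t) + σ_y·π + (1/2)κ_H·π²)/E_n (the square of the tangent of the energetic fracture-mode-mixity angle). Then the effective dissipated energy satisfies a_I + σ_y·π + (1/2)κ_H·π² = (2 a_I (κ_t + κ_H) − σ_y²)·(1 + T) / (2 (κ_t + κ_H + κ_H·T)). -/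
/-- At the onset of delamination in the plasticity-based interface
model, with yield condition `σt = σy + κH·π`, activation condition
`En + σt²/(2κt) = aI`, and `T = tan²ψ_G` the square of the tangent of the
energetic fracture-mode-mixity angle, the effective dissipated energy satisfies
`aI + σy·π + (1/2)κH·π² = (2 aI (κt + κH) − σy²)(1 + T) / (2 (κt + κH + κH·T))`. -/
theorem stmt0 (κt κH aI σy σt π En T : ℝ)
    (hκt : 0 < κt) (hκH : 0 < κH) (haI : 0 < aI) (hσy : 0 ≤ σy)
    (hπ : 0 ≤ π) (hEn : 0 < En)
    (hyield : σt = σy + κH * π)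
    (hact : En + σt ^ 2 / (2 * κt) = aI)
    (hT : T = (σt ^ 2 / (2 * κt) + σy * π + (1 / 2) * κH * π ^ 2) / En) :
    aI + σy * π + (1 / 2) * κH * π ^ 2
      = (2 * aI * (κt + κH) - σy ^ 2) * (1 + T) / (2 * (κt + κH + κH * T)) := by
  have h1 : σt ^ 2 = 2 * κt * (aI - En) := by
    field_simp at hact
    linarith
  have h2 : T * En = (aI - En) + σy * π + (1 / 2) * κH * π ^ 2 := by
    rw [hT, div_mul_cancel₀ _ hEn.ne']
    linarith [h1, (by positivity : (0:ℝ) < 2 * κt),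
      (div_eq_iff (by positivity : (2 * κt : ℝ) ≠ 0)).mpr
        (by linarith : σt ^ 2 = (aI - En) * (2 * κt))]
  have hTnn : 0 ≤ T := by
    rw [hT]
    apply div_nonneg _ hEn.le
    have : 0 ≤ σt ^ 2 / (2 * κt) := by positivity
    nlinarith
  have hden : (2 * (κt + κH + κH * T)) ≠ 0 := by positivity
  rw [eq_div_iff hden]
  apply mul_left_cancel₀ hEn.ne'
  subst hyield
  linear_combination ((σy + κH * π) ^ 2 - 2 * aI * κt) * h2
    + (aI + σy * π + (1 / 2) * κH * π ^ 2) * h1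
end

section
/- Assume 0 < σ_y < √(2 κ_t a_I) and let ψ* := arcsin(σ_y/√(2 κ_t a_I)). Then G_c(ψ*) = a_I; in particular the piecewise fracture-energy law, equal to the constant a_I for ψ ≤ ψ* and to G_c(ψ) for ψ* ≤ ψ < π/2, is continuous at ψ*. -/
/-!
Since `sin ψ* = σ_y / √(2 κ_t a_I)`, one has `tan² ψ* = σ_y² / (2 κ_t a_I - σ_y²)`; substituting
this makes the numerator and denominator of `G_c(ψ*)` share the factor
`2 a_I (κ_t + κ_H) - σ_y²`, and `G_c(ψ*)` collapses to `a_I`. Continuity of the piecewise law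
follows because `tan` is continuous at `ψ* < π / 2` and the two branches agree there.
-/

open Real Filter Topology

theorem ContinuousAt.ite_of_eq {α β : Type*} [TopologicalSpace α] [TopologicalSpace β]
    {p : α → Prop} [DecidablePred p] {f g : α → β} {a : α}
    (hf : ContinuousAt f a) (hg : ContinuousAt g a) (hfg : f a = g a) :
    ContinuousAt (fun x => if p x then f x else g x) a := by
  have h : Tendsto (fun x => if p x then f x else g x) (𝓝 a) (𝓝 (f a)) :=
    hf.tendsto.if' (hfg ▸ hg.tendsto)
  by_cases hp : p a
  · simpa [ContinuousAt, hp] using h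
  · simpa [ContinuousAt, hp, hfg] using h

theorem continuousAt_tan_arcsin {x : ℝ} (hx : x ^ 2 < 1) : ContinuousAt tan (arcsin x) :=
  continuousAt_tan.mpr <| by
    rw [cos_arcsin]
    exact (sqrt_pos.mpr (sub_pos.mpr hx)).ne'

theorem tan_arcsin_sq {x : ℝ} (hx : x ^ 2 ≤ 1) : tan (arcsin x) ^ 2 = x ^ 2 / (1 - x ^ 2) := by
  rw [tan_arcsin, div_pow, sq_sqrt (sub_nonneg.mpr hx)]

theorem tan_arcsin_div_sqrt_sq {s A : ℝ} (hsA : s ^ 2 < A) :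
    tan (arcsin (s / √A)) ^ 2 = s ^ 2 / (A - s ^ 2) := by
  have hA : 0 < A := (sq_nonneg s).trans_lt hsA
  have hx : (s / √A) ^ 2 = s ^ 2 / A := by rw [div_pow, sq_sqrt hA.le]
  rw [tan_arcsin_sq (by rw [hx, div_le_one hA]; exact hsA.le), hx]
  field_simp

theorem fractureEnergy_at_tan_sq {k h a s : ℝ} (hk : k ≠ 0) (hD : 2 * k * a - s ^ 2 ≠ 0)
    (hN : 2 * a * (k + h) - s ^ 2 ≠ 0) :
    (2 * a * (k + h) - s ^ 2) * (1 + s ^ 2 / (2 * k * a - s ^ 2))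
      / (2 * (k + h + h * (s ^ 2 / (2 * k * a - s ^ 2)))) = a := by
  have h1 : 1 + s ^ 2 / (2 * k * a - s ^ 2) = 2 * k * a / (2 * k * a - s ^ 2) := by
    rw [eq_div_iff hD, add_mul, div_mul_cancel₀ _ hD]
    ring
  have h2 : k + h + h * (s ^ 2 / (2 * k * a - s ^ 2))
      = k * (2 * a * (k + h) - s ^ 2) / (2 * k * a - s ^ 2) := by
    rw [eq_div_iff hD, add_mul, mul_assoc h, div_mul_cancel₀ _ hD]
    ring
  rw [h1, h2, mul_div_assoc', mul_div_assoc', div_div_div_cancel_right₀ hD]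
  field_simp

/-- With `ψ* = arcsin(σy/√(2 κt a_I))` and `0 < σy < √(2 κt a_I)`,
the fracture-energy law satisfies `G_c(ψ*) = a_I`; in particular the piecewise law,
equal to the constant `a_I` for `ψ ≤ ψ*` and to `G_c(ψ)` for `ψ* ≤ ψ < π/2`,
is continuous at `ψ*`. -/
theorem stmt6 (κt κH aI σy : ℝ)
    (hκt : 0 < κt) (hκH : 0 < κH) (haI : 0 < aI)
    (hσy : 0 < σy) (hσy' : σy < Real.sqrt (2 * κt * aI))
    (Gc : ℝ → ℝ)
    (hGc : ∀ ψ, Gc ψ = (2 * aI * (κt + κH) - σy ^ 2) * (1 + Real.tan ψ ^ 2)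
        / (2 * (κt + κH + κH * Real.tan ψ ^ 2)))
    (ψs : ℝ) (hψs : ψs = Real.arcsin (σy / Real.sqrt (2 * κt * aI))) :
    Gc ψs = aI ∧
    ContinuousAt (fun ψ : ℝ => if ψ ≤ ψs then aI else Gc ψ) ψs := by
  have hσ2 : σy ^ 2 < 2 * κt * aI := (lt_sqrt hσy.le).mp hσy'
  have htan : tan ψs ^ 2 = σy ^ 2 / (2 * κt * aI - σy ^ 2) := by
    rw [hψs, tan_arcsin_div_sqrt_sq hσ2]
  have hGcψs : Gc ψs = aI := by
    rw [hGc, htan]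
    exact fractureEnergy_at_tan_sq hκt.ne' (by linarith) (by nlinarith)
  have htanc : ContinuousAt tan ψs := by
    have hA : 0 < 2 * κt * aI := by positivity
    rw [hψs]
    refine continuousAt_tan_arcsin ?_
    rw [div_pow, sq_sqrt hA.le, div_lt_one hA]
    exact hσ2
  have hGcc : ContinuousAt Gc ψs := by
    rw [funext hGc]
    exact (continuousAt_const.mul (continuousAt_const.add (htanc.pow 2))).div
      (continuousAt_const.mul (continuousAt_const.add (continuousAt_const.mul (htanc.pow 2))))
      (by positivity)
  exact ⟨hGcψs, continuousAt_const.ite_of_eq hGcc hGcψs.symm⟩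
end

section
/- If σ_y² < 2 a_I (κ_t + κ_H), then G_c is strictly increasing on [0, π/2): for all 0 ≤ ψ₁ < ψ₂ < π/2 one has G_c(ψ₁) < G_c(ψ₂). -/
/-- If `σy² < 2 a_I (κt + κH)`, then the fracture-energy law `G_c`
is strictly increasing on `[0, π/2)`. -/
theorem stmt7 (κt κH aI σy : ℝ)
    (hκt : 0 < κt) (hκH : 0 < κH) (haI : 0 < aI) (hσy : 0 ≤ σy)
    (h : σy ^ 2 < 2 * aI * (κt + κH))
    (Gc : ℝ → ℝ)
    (hGc : ∀ ψ, Gc ψ = (2 * aI * (κt + κH) - σy ^ 2) * (1 + Real.tan ψ ^ 2)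
        / (2 * (κt + κH + κH * Real.tan ψ ^ 2))) :
    ∀ ψ₁ ψ₂ : ℝ, 0 ≤ ψ₁ → ψ₁ < ψ₂ → ψ₂ < Real.pi / 2 → Gc ψ₁ < Gc ψ₂ := by
  intro ψ₁ ψ₂ h1 h12 h2
  have ht : Real.tan ψ₁ < Real.tan ψ₂ :=
    Real.tan_lt_tan_of_nonneg_of_lt_pi_div_two h1 h2 h12
  have ht1 : 0 ≤ Real.tan ψ₁ := Real.tan_nonneg_of_nonneg_of_le_pi_div_two h1 (le_of_lt (h12.trans h2))
  have hsq : Real.tan ψ₁ ^ 2 < Real.tan ψ₂ ^ 2 := by nlinarith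
  rw [hGc, hGc]
  have hd1 : 0 < 2 * (κt + κH + κH * Real.tan ψ₁ ^ 2) := by nlinarith
  have hd2 : 0 < 2 * (κt + κH + κH * Real.tan ψ₂ ^ 2) := by nlinarith
  rw [div_lt_div_iff₀ hd1 hd2]
  nlinarith [mul_pos (sub_pos.2 h) (mul_pos hκt (sub_pos.2 hsq))]
end

section
/- Assume 0 < σ_y < √(2 κ_t a_I) and let ψ* := arcsin(σ_y/√(2 κ_t a_I)). Then for every ψ with ψ* ≤ ψ < π/2 one has a_I ≤ G_c(ψ) < a_II, where a_II = a_I·(1 + κ_t/κ_H) − σ_y²/(2 κ_H). -/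
/-!
Write `T = tan² ψ` and `B = 2 a_I (κt + κH) − σy²`, so that `G_c = B (1 + T) / (2 (κt + κH (1 + T)))`.
Completing the square in `π_II` gives `a_II = B / (2 κH)`, and the upper bound is just `κt > 0` in the
denominator. The lower bound `a_I ≤ G_c` is equivalent to `σy² ≤ T (2 κt a_I − σy²)`, which holds
exactly from `ψ*` on, since `tan² ψ* = σy² / (2 κt a_I − σy²)` and `tan` is increasing on `[ψ*, π/2)`.
-/

open Real

theorem sq_le_tan_sq_mul_one_sub_sq {x ψ : ℝ} (hx₀ : 0 ≤ x) (hx₁ : x < 1)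
    (hψ : arcsin x ≤ ψ) (hψ' : ψ < π / 2) :
    x ^ 2 ≤ tan ψ ^ 2 * (1 - x ^ 2) := by
  have hx : 0 < 1 - x ^ 2 := by nlinarith
  have hmem : arcsin x ∈ Set.Ioo (-(π / 2)) (π / 2) :=
    ⟨by linarith [arcsin_nonneg.mpr hx₀, pi_pos], (arcsin_lt_pi_div_two).mpr hx₁⟩
  have htan : tan (arcsin x) ≤ tan ψ :=
    strictMonoOn_tan.monotoneOn hmem ⟨by linarith [hmem.1], hψ'⟩ hψ
  have htan₀ : 0 ≤ tan (arcsin x) := by rw [tan_arcsin]; positivity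
  have hsq : x ^ 2 / (1 - x ^ 2) ≤ tan ψ ^ 2 := by
    calc x ^ 2 / (1 - x ^ 2) = tan (arcsin x) ^ 2 := by
          rw [tan_arcsin, div_pow, sq_sqrt hx.le]
      _ ≤ tan ψ ^ 2 := pow_le_pow_left₀ htan₀ htan 2
  rwa [div_le_iff₀ hx] at hsq

theorem sq_le_tan_sq_mul_sub_sq {σ c ψ : ℝ} (hσ : 0 ≤ σ) (hσc : σ < √c)
    (hψ : arcsin (σ / √c) ≤ ψ) (hψ' : ψ < π / 2) :
    σ ^ 2 ≤ tan ψ ^ 2 * (c - σ ^ 2) := by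
  have hc : 0 < √c := hσ.trans_lt hσc
  have key := sq_le_tan_sq_mul_one_sub_sq (div_nonneg hσ hc.le) ((div_lt_one hc).mpr hσc) hψ hψ'
  have hc' : 0 < c := sqrt_pos.mp hc
  rw [div_pow, sq_sqrt hc'.le] at key
  field_simp at key
  linarith

noncomputable def fractureEnergy (κt κH aI σ T : ℝ) : ℝ :=
  (2 * aI * (κt + κH) - σ ^ 2) * (1 + T) / (2 * (κt + κH + κH * T))

section FractureEnergy

variable {κt κH aI σ T : ℝ}

theorem le_fractureEnergy (hκt : 0 < κt) (hκH : 0 ≤ κH) (hT : 0 ≤ T)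
    (h : σ ^ 2 ≤ T * (2 * κt * aI - σ ^ 2)) :
    aI ≤ fractureEnergy κt κH aI σ T := by
  rw [fractureEnergy, le_div_iff₀ (by positivity)]
  linarith

theorem fractureEnergy_lt (hκt : 0 < κt) (hκH : 0 < κH) (hT : 0 ≤ T)
    (hB : 0 < 2 * aI * (κt + κH) - σ ^ 2) :
    fractureEnergy κt κH aI σ T < (2 * aI * (κt + κH) - σ ^ 2) / (2 * κH) := by
  rw [fractureEnergy, div_lt_div_iff₀ (by positivity) (by positivity)]
  nlinarith [mul_pos hB hκt]

theorem modeII_fractureEnergy_eq {s : ℝ} (hκH : κH ≠ 0) (hs : s ^ 2 = 2 * κt * aI) :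
    aI + σ * ((s - σ) / κH) + 1 / 2 * κH * ((s - σ) / κH) ^ 2
      = (2 * aI * (κt + κH) - σ ^ 2) / (2 * κH) := by
  field_simp
  linear_combination hs

end FractureEnergy

theorem stmt8_general (κt κH aI σy σc πII aII : ℝ)
    (hκt : 0 < κt) (hκH : 0 < κH)
    (hσy : 0 < σy) (hσy' : σy < Real.sqrt (2 * κt * aI))
    (hσc : σc = Real.sqrt (2 * κt * aI))
    (hπII : πII = (σc - σy) / κH)
    (haII : aII = aI + σy * πII + (1 / 2) * κH * πII ^ 2)
    (Gc : ℝ → ℝ)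
    (hGc : ∀ ψ, Gc ψ = (2 * aI * (κt + κH) - σy ^ 2) * (1 + Real.tan ψ ^ 2)
        / (2 * (κt + κH + κH * Real.tan ψ ^ 2)))
    (ψs : ℝ) (hψs : ψs = Real.arcsin (σy / Real.sqrt (2 * κt * aI))) :
    (∀ ψ : ℝ, ψs ≤ ψ → ψ < Real.pi / 2 → aI ≤ Gc ψ ∧ Gc ψ < aII) ∧
    aII = aI * (1 + κt / κH) - σy ^ 2 / (2 * κH) := by
  have hσy₂ : σy ^ 2 < 2 * κt * aI := (lt_sqrt hσy.le).mp hσy'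
  have hκtaI : 0 < 2 * κt * aI := (pow_pos hσy 2).trans hσy₂
  have hσc₂ : σc ^ 2 = 2 * κt * aI := by rw [hσc, sq_sqrt hκtaI.le]
  have haI : 0 < aI := pos_of_mul_pos_right hκtaI (by positivity)
  have haII' : aII = (2 * aI * (κt + κH) - σy ^ 2) / (2 * κH) := by
    rw [haII, hπII, modeII_fractureEnergy_eq hκH.ne' hσc₂]
  refine ⟨fun ψ hψ hψ' => ?_, by rw [haII']; field_simp; ring⟩
  rw [hGc, haII', ← fractureEnergy]
  exact ⟨le_fractureEnergy hκt hκH.le (sq_nonneg _)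
      (sq_le_tan_sq_mul_sub_sq hσy.le hσy' (hψs ▸ hψ) hψ'),
    fractureEnergy_lt hκt hκH (sq_nonneg _) (by nlinarith)⟩

/-- With `0 < σy < √(2 κt a_I)` and `ψ* = arcsin(σy/√(2 κt a_I))`,
for every `ψ` with `ψ* ≤ ψ < π/2` one has `a_I ≤ G_c(ψ) < a_II`, where
`a_II = a_I·(1 + κt/κH) − σy²/(2κH)`. -/
theorem stmt8 (κt κH aI σy σc πII aII : ℝ)
    (hκt : 0 < κt) (hκH : 0 < κH) (haI : 0 < aI)
    (hσy : 0 < σy) (hσy' : σy < Real.sqrt (2 * κt * aI))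
    (hσc : σc = Real.sqrt (2 * κt * aI))
    (hπII : πII = (σc - σy) / κH)
    (haII : aII = aI + σy * πII + (1 / 2) * κH * πII ^ 2)
    (Gc : ℝ → ℝ)
    (hGc : ∀ ψ, Gc ψ = (2 * aI * (κt + κH) - σy ^ 2) * (1 + Real.tan ψ ^ 2)
        / (2 * (κt + κH + κH * Real.tan ψ ^ 2)))
    (ψs : ℝ) (hψs : ψs = Real.arcsin (σy / Real.sqrt (2 * κt * aI))) :
    (∀ ψ : ℝ, ψs ≤ ψ → ψ < Real.pi / 2 → aI ≤ Gc ψ ∧ Gc ψ < aII) ∧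
    aII = aI * (1 + κt / κH) - σy ^ 2 / (2 * κH) :=
  stmt8_general κt κH aI σy σc πII aII hκt hκH hσy hσy' hσc hπII haII Gc hGc ψs hψs
end

section
/- One has the identity κ_t·u_II² − 2·a_II = (κ_t + κ_H)·π_II². Consequently, if 0 ≤ σ_y < √(2 κ_t a_I), then 2·a_II/u_II² < κ_t, i.e. the tangential stiffness of the linear elastic-brittle interface fitted to have the same Mode-II rupture displacement and fracture energy is strictly lower than the tangential stiffness κ_t of the plasticity-based model. -/
/-!
The rupture displacement splits as `u_II = σc / κt + π_II`: the elastic opening at the critical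
stress plus the plastic slip. Expanding `κt·u_II²` with `σc² = 2 κt a_I` and
`κH·π_II = σc − σy` gives the identity, and for `σy < σc` its right-hand side is positive
because `π_II > 0`.
-/

section ModeIIRupture

variable {κt κH σc σy π : ℝ}

lemma modeII_rupture_displacement_eq (hκt : κt ≠ 0) (hκH : κH ≠ 0) :
    (σc * (κt + κH) - σy * κt) / (κt * κH) = σc / κt + (σc - σy) / κH := by
  field_simp
  ring

lemma modeII_energy_gap_eq {aI : ℝ} (hκt : κt ≠ 0) (hσc : σc ^ 2 = 2 * κt * aI)
    (hπ : κH * π = σc - σy) :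
    κt * (σc / κt + π) ^ 2 - 2 * (aI + σy * π + 1 / 2 * κH * π ^ 2) = (κt + κH) * π ^ 2 := by
  field_simp
  linear_combination hσc + (-2 * κt * π) * hπ

end ModeIIRupture

theorem stmt9_general (κt κH aI σy σc πII uII aII : ℝ)
    (hκt : 0 < κt) (hκH : 0 < κH) (haI : 0 < aI)
    (hσc : σc = Real.sqrt (2 * κt * aI))
    (hπII : πII = (σc - σy) / κH)
    (huII : uII = (σc * (κt + κH) - σy * κt) / (κt * κH))
    (haII : aII = aI + σy * πII + (1 / 2) * κH * πII ^ 2) :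
    κt * uII ^ 2 - 2 * aII = (κt + κH) * πII ^ 2 ∧
    (σy < Real.sqrt (2 * κt * aI) → 2 * aII / uII ^ 2 < κt) := by
  have hσc_sq : σc ^ 2 = 2 * κt * aI := hσc ▸ Real.sq_sqrt (by positivity)
  have hslip : κH * πII = σc - σy := by
    rw [hπII]
    field_simp
  have hu : uII = σc / κt + πII := by
    rw [huII, hπII, modeII_rupture_displacement_eq hκt.ne' hκH.ne']
  have hgap : κt * uII ^ 2 - 2 * aII = (κt + κH) * πII ^ 2 := by
    rw [hu, haII]
    exact modeII_energy_gap_eq hκt.ne' hσc_sq hslip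
  refine ⟨hgap, fun hlt => ?_⟩
  have hπ_pos : 0 < πII := by
    rw [hπII]
    exact div_pos (by linarith) hκH
  have hu_pos : 0 < uII := by
    rw [hu]
    exact add_pos_of_nonneg_of_pos (div_nonneg (hσc ▸ Real.sqrt_nonneg _) hκt.le) hπ_pos
  rw [div_lt_iff₀ (by positivity)]
  linarith [mul_pos (add_pos hκt hκH) (pow_pos hπ_pos 2)]

/-- One has `κt·u_II² − 2·a_II = (κt + κH)·π_II²`; consequently,
if `0 ≤ σy < √(2 κt a_I)`, then `2·a_II/u_II² < κt`: the tangential stiffness of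
the linear elastic-brittle interface fitted to the same Mode-II rupture
displacement and fracture energy is strictly lower than `κt`. -/
theorem stmt9 (κt κH aI σy σc πII uII aII : ℝ)
    (hκt : 0 < κt) (hκH : 0 < κH) (haI : 0 < aI)
    (hσy : 0 ≤ σy) (hσy' : σy ≤ Real.sqrt (2 * κt * aI))
    (hσc : σc = Real.sqrt (2 * κt * aI))
    (hπII : πII = (σc - σy) / κH)
    (huII : uII = (σc * (κt + κH) - σy * κt) / (κt * κH))
    (haII : aII = aI + σy * πII + (1 / 2) * κH * πII ^ 2) :
    κt * uII ^ 2 - 2 * aII = (κt + κH) * πII ^ 2 ∧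
    (σy < Real.sqrt (2 * κt * aI) → 2 * aII / uII ^ 2 < κt) :=
  stmt9_general κt κH aI σy σc πII uII aII hκt hκH haI hσc hπII huII haII
end

section
/- Under the hypotheses σ_t = σ_y + κ_H·π, E_n + σ_t²/(2κ_t) = a_I, π ≥ 0, E_n > 0, and T := (σ_t²/(2κ_t) + σ_y·π + (1/2)κ_H·π²)/E_n, the tangential stress at the onset of delamination satisfies σ_t² = κ_t·(σ_y² + 2 a_I κ_H·T)/(κ_t + κ_H + κ_H·T). -/
/-- Under the yield condition `σt = σy + κH·π`, the activation
condition `En + σt²/(2κt) = a_I`, with `π ≥ 0`, `En > 0` and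
`T = (σt²/(2κt) + σy·π + (1/2)κH·π²)/En` (the square of the tangent of the
energetic mixity angle), the tangential stress at the onset of delamination
satisfies `σt² = κt·(σy² + 2 a_I κH·T)/(κt + κH + κH·T)`. -/
theorem stmt11 (κt κH aI σy σt π En T : ℝ)
    (hκt : 0 < κt) (hκH : 0 < κH) (haI : 0 < aI) (hσy : 0 ≤ σy)
    (hπ : 0 ≤ π) (hEn : 0 < En)
    (hyield : σt = σy + κH * π)
    (hact : En + σt ^ 2 / (2 * κt) = aI)
    (hT : T = (σt ^ 2 / (2 * κt) + σy * π + (1 / 2) * κH * π ^ 2) / En) :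
    σt ^ 2 = κt * (σy ^ 2 + 2 * aI * κH * T) / (κt + κH + κH * T) := by
  have hT0 : 0 ≤ T := by
    rw [hT]
    have : 0 ≤ σt ^ 2 / (2 * κt) + σy * π + (1 / 2) * κH * π ^ 2 := by positivity
    positivity
  have hden : κt + κH + κH * T > 0 := by positivity
  have hS : 2 * κt * (T * En) = σt ^ 2 + 2 * κt * σy * π + κt * κH * π ^ 2 := by
    rw [hT]; field_simp
  rw [eq_div_iff hden.ne']
  have hA : σt ^ 2 = 2 * κt * (aI - En) := by
    field_simp at hact; linarith
  linear_combination κH * T * hA - κH * hS + κt * (σt + σy + κH * π) * hyield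
end
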